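/- arXiv:2204.01585 — 6 statements merged into one kernel-verified Lean document; each statement's English description precedes it below -/
import Mathlib

section
/- Privacy of the continuous exponential mechanism (privacy part of Theorem 3.1; convexity of the loss is not needed). Let C ⊆ ℝ^p be a compact convex set with diameter ‖C‖ > 0 and positive Lebesgue measure, and suppose that for every d ∈ τ the map θ ↦ ℓ(θ; d) is L-Lipschitz on C. Fix ε > 0 and for a dataset D of size n let μ_D be the Gibbs measure on C with inverse temperature β = εn/(2L‖C‖), i.e., with density proportional to exp(−(εn/(2L‖C‖))·𝓛(θ; D)) with respect to Lebesgue measure restricted to C. Then for any two neighboring datasets D, D′ of size n and every measurable set S ⊆ C, μ_D(S) ≤ e^ε · μ_{D′}(S). -/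
open MeasureTheory Real

noncomputable section

/-- ℝ^p as a Euclidean space. -/
abbrev Eu (p : ℕ) := EuclideanSpace ℝ (Fin p)

/-- The Gibbs measure on `C` with inverse temperature `β` for the potential `F`:
the probability measure whose density with respect to Lebesgue measure restricted
to `C` is proportional to `exp (-β * F θ)`. -/
def gibbs {p : ℕ} (C : Set (Eu p)) (β : ℝ) (F : Eu p → ℝ) : Measure (Eu p) :=
  (∫⁻ θ in C, ENNReal.ofReal (Real.exp (-β * F θ)))⁻¹ •
    (volume.restrict C).withDensity fun θ => ENNReal.ofReal (Real.exp (-β * F θ))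

/-- The empirical loss `𝓛(θ; D) = (1/n) ∑ i, ℓ(θ; dᵢ)`. -/
def empLoss {p n : ℕ} {τ : Type*} (ℓ : Eu p → τ → ℝ) (D : Fin n → τ) (θ : Eu p) : ℝ :=
  (1 / (n : ℝ)) * ∑ i, ℓ θ (D i)

/-- Two datasets of size `n` are neighboring if they differ in exactly one entry. -/
def Neighboring {n : ℕ} {τ : Type*} (D D' : Fin n → τ) : Prop :=
  ∃ i, D i ≠ D' i ∧ ∀ j, j ≠ i → D j = D' j

/-- privacy of the continuous exponential mechanism. -/
theorem exponential_mechanism_pure_dp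
    {p n : ℕ} (hp : 1 ≤ p) (hn : 1 ≤ n) {τ : Type*}
    (ℓ : Eu p → τ → ℝ)
    (C : Set (Eu p)) (hCcomp : IsCompact C) (hCconv : Convex ℝ C)
    (hdiam : 0 < Metric.diam C) (hvol : 0 < volume C)
    (L : ℝ) (hL : 0 < L)
    (hLip : ∀ d : τ, LipschitzOnWith L.toNNReal (fun θ => ℓ θ d) C)
    (ε : ℝ) (hε : 0 < ε)
    (D D' : Fin n → τ) (hDD' : Neighboring D D')
    (S : Set (Eu p)) (hS : MeasurableSet S) (hSC : S ⊆ C) :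
    gibbs C (ε * n / (2 * L * Metric.diam C)) (empLoss ℓ D) S ≤
      ENNReal.ofReal (Real.exp ε) *
        gibbs C (ε * n / (2 * L * Metric.diam C)) (empLoss ℓ D') S := by
  obtain ⟨i, hi, hj⟩ := hDD'
  have hn0 : (0:ℝ) < n := by exact_mod_cast hn
  set dC := Metric.diam C with hdC
  set β := ε * (n:ℝ) / (2 * L * dC) with hβ
  have hβpos : 0 < β := by
    apply div_pos (by positivity) (by positivity)
  set G : Eu p → ℝ := fun θ => empLoss ℓ D θ - empLoss ℓ D' θ with hGdef
  have hGeq : ∀ θ, G θ = (1/(n:ℝ)) * (ℓ θ (D i) - ℓ θ (D' i)) := by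
    intro θ
    simp only [hGdef, empLoss]
    rw [← mul_sub, ← Finset.sum_sub_distrib]
    congr 1
    rw [Finset.sum_eq_single i]
    · intro j _ hji
      rw [hj j hji]; ring
    · intro h; exact absurd (Finset.mem_univ i) h
  have hCne : C.Nonempty := by
    rcases C.eq_empty_or_nonempty with h | h
    · rw [h] at hvol; simp at hvol
    · exact h
  have hGcont : ContinuousOn G C := by
    have hGfun : G = fun θ => (1/(n:ℝ)) * (ℓ θ (D i) - ℓ θ (D' i)) := funext hGeq
    rw [hGfun]
    exact continuousOn_const.mul (((hLip (D i)).continuousOn).sub ((hLip (D' i)).continuousOn))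
  obtain ⟨θ₀, hθ₀C, hmin⟩ := hCcomp.exists_isMinOn hCne hGcont
  set m := G θ₀ with hm
  have hLcoe : ((L.toNNReal : ℝ)) = L := Real.coe_toNNReal L hL.le
  have hDelta : ∀ θ ∈ C, G θ ≤ m + 2 * L * dC / n := by
    intro θ hθ
    have hdist : dist θ θ₀ ≤ dC := Metric.dist_le_diam_of_mem hCcomp.isBounded hθ hθ₀C
    have h1 : dist (ℓ θ (D i)) (ℓ θ₀ (D i)) ≤ L * dC := by
      calc dist (ℓ θ (D i)) (ℓ θ₀ (D i)) ≤ (L.toNNReal : ℝ) * dist θ θ₀ :=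
            (hLip (D i)).dist_le_mul θ hθ θ₀ hθ₀C
        _ ≤ L * dC := by rw [hLcoe]; exact mul_le_mul_of_nonneg_left hdist hL.le
    have h2 : dist (ℓ θ (D' i)) (ℓ θ₀ (D' i)) ≤ L * dC := by
      calc dist (ℓ θ (D' i)) (ℓ θ₀ (D' i)) ≤ (L.toNNReal : ℝ) * dist θ θ₀ :=
            (hLip (D' i)).dist_le_mul θ hθ θ₀ hθ₀C
        _ ≤ L * dC := by rw [hLcoe]; exact mul_le_mul_of_nonneg_left hdist hL.le
    rw [Real.dist_eq] at h1 h2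
    have h1' : ℓ θ (D i) - ℓ θ₀ (D i) ≤ L * dC := (abs_le.mp h1).2
    have h2' : ℓ θ₀ (D' i) - ℓ θ (D' i) ≤ L * dC := by
      have := (abs_le.mp h2).1; linarith
    have hrw : G θ - m = (1/(n:ℝ)) * ((ℓ θ (D i) - ℓ θ₀ (D i)) + (ℓ θ₀ (D' i) - ℓ θ (D' i))) := by
      rw [hm, hGeq θ, hGeq θ₀]; ring
    have : G θ - m ≤ (1/(n:ℝ)) * (2 * L * dC) := by
      rw [hrw]
      apply mul_le_mul_of_nonneg_left _ (by positivity)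
      linarith
    have hfin : (1/(n:ℝ)) * (2 * L * dC) = 2 * L * dC / n := by ring
    rw [hfin] at this
    linarith
  have hβΔ : β * (2 * L * dC / n) = ε := by
    rw [hβ]
    field_simp
  -- pointwise bounds
  have hLD : ∀ θ, empLoss ℓ D θ = empLoss ℓ D' θ + G θ := by
    intro θ; rw [hGdef]; ring
  have hpt_num : ∀ θ ∈ C,
      Real.exp (-β * empLoss ℓ D θ) ≤ Real.exp (-β * m) * Real.exp (-β * empLoss ℓ D' θ) := by
    intro θ hθ
    rw [← Real.exp_add]
    apply Real.exp_le_exp.mpr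
    have hGm : m ≤ G θ := hmin hθ
    have h0 := hLD θ
    have h3 : β * m ≤ β * G θ := mul_le_mul_of_nonneg_left hGm hβpos.le
    have h4 : β * empLoss ℓ D θ = β * empLoss ℓ D' θ + β * G θ := by rw [h0]; ring
    linarith
  have hpt_den : ∀ θ ∈ C,
      Real.exp (-β * m - ε) * Real.exp (-β * empLoss ℓ D' θ) ≤ Real.exp (-β * empLoss ℓ D θ) := by
    intro θ hθ
    rw [← Real.exp_add]
    apply Real.exp_le_exp.mpr
    have hGub : G θ ≤ m + 2 * L * dC / n := hDelta θ hθ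
    have h0 := hLD θ
    have h3 : β * G θ ≤ β * (m + 2 * L * dC / n) := mul_le_mul_of_nonneg_left hGub hβpos.le
    rw [mul_add, hβΔ] at h3
    have h4 : β * empLoss ℓ D θ = β * empLoss ℓ D' θ + β * G θ := by rw [h0]; ring
    linarith
  set f : (Fin n → τ) → Eu p → ENNReal :=
    fun E θ => ENNReal.ofReal (Real.exp (-β * empLoss ℓ E θ)) with hf
  have hC : MeasurableSet C := hCcomp.isClosed.measurableSet
  have hnum : ∫⁻ θ in S, f D θ ≤ ENNReal.ofReal (Real.exp (-β * m)) * ∫⁻ θ in S, f D' θ := by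
    rw [← lintegral_const_mul' _ _ ENNReal.ofReal_ne_top]
    apply lintegral_mono_ae
    rw [ae_restrict_iff' hS]
    apply ae_of_all
    intro θ hθ
    rw [hf]
    simp only
    rw [← ENNReal.ofReal_mul (Real.exp_nonneg _)]
    exact ENNReal.ofReal_le_ofReal (hpt_num θ (hSC hθ))
  have hden : ENNReal.ofReal (Real.exp (-β * m - ε)) * ∫⁻ θ in C, f D' θ ≤ ∫⁻ θ in C, f D θ := by
    rw [← lintegral_const_mul' _ _ ENNReal.ofReal_ne_top]
    apply lintegral_mono_ae
    rw [ae_restrict_iff' hC]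
    apply ae_of_all
    intro θ hθ
    rw [hf]
    simp only
    rw [← ENNReal.ofReal_mul (Real.exp_nonneg _)]
    exact ENNReal.ofReal_le_ofReal (hpt_den θ hθ)
  have hgibbs : ∀ E : Fin n → τ,
      gibbs C β (empLoss ℓ E) S = (∫⁻ θ in C, f E θ)⁻¹ * ∫⁻ θ in S, f E θ := by
    intro E
    rw [gibbs, Measure.smul_apply, smul_eq_mul, withDensity_apply _ hS,
      Measure.restrict_restrict hS, Set.inter_eq_self_of_subset_left hSC]
  have hZinv : (∫⁻ θ in C, f D θ)⁻¹ ≤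
      (ENNReal.ofReal (Real.exp (-β * m - ε)))⁻¹ * (∫⁻ θ in C, f D' θ)⁻¹ := by
    rw [← ENNReal.mul_inv (Or.inl (by simp [Real.exp_pos])) (Or.inl ENNReal.ofReal_ne_top)]
    exact ENNReal.inv_le_inv.mpr hden
  have hc1 : (ENNReal.ofReal (Real.exp (-β * m - ε)))⁻¹ = ENNReal.ofReal (Real.exp (β * m + ε)) := by
    rw [← ENNReal.ofReal_inv_of_pos (Real.exp_pos _), ← Real.exp_neg]
    ring_nf
  calc gibbs C β (empLoss ℓ D) S = (∫⁻ θ in C, f D θ)⁻¹ * ∫⁻ θ in S, f D θ := hgibbs D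
    _ ≤ ((ENNReal.ofReal (Real.exp (-β * m - ε)))⁻¹ * (∫⁻ θ in C, f D' θ)⁻¹) *
        (ENNReal.ofReal (Real.exp (-β * m)) * ∫⁻ θ in S, f D' θ) := mul_le_mul' hZinv hnum
    _ = ((ENNReal.ofReal (Real.exp (-β * m - ε)))⁻¹ * ENNReal.ofReal (Real.exp (-β * m))) *
        ((∫⁻ θ in C, f D' θ)⁻¹ * ∫⁻ θ in S, f D' θ) := by ring
    _ = ENNReal.ofReal (Real.exp ε) * ((∫⁻ θ in C, f D' θ)⁻¹ * ∫⁻ θ in S, f D' θ) := by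
        rw [hc1, ← ENNReal.ofReal_mul (Real.exp_nonneg _), ← Real.exp_add]
        ring_nf
    _ = ENNReal.ofReal (Real.exp ε) * gibbs C β (empLoss ℓ D') S := by rw [hgibbs D']

end
end

section
/- Exponential-mechanism tail bound relative to a subset (the utility lemma underlying Theorems 3.1, 3.3, and 3.5). Let C ⊆ ℝ^p be a measurable set with 0 < vol(C) < ∞, let F : C → ℝ be a bounded measurable function, let β > 0, and let μ be the Gibbs measure on C with density proportional to exp(−βF(θ)). Then for every measurable subset G ⊆ C with vol(G) > 0 and every γ ≥ 0, μ({θ ∈ C : F(θ) > sup_{θ′ ∈ G} F(θ′) + γ}) ≤ (vol(C)/vol(G)) · e^{−βγ}. -/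
open MeasureTheory Real ENNReal

noncomputable section

/-- exponential-mechanism tail bound relative to a subset `G ⊆ C`. -/
theorem exponential_mechanism_tail_bound
    {p : ℕ} (hp : 1 ≤ p)
    (C : Set (Eu p)) (hC : MeasurableSet C)
    (hvol0 : 0 < volume C) (hvolfin : volume C < ⊤)
    (F : Eu p → ℝ) (hFmeas : Measurable F)
    (B : ℝ) (hFbdd : ∀ θ ∈ C, |F θ| ≤ B)
    (β : ℝ) (hβ : 0 < β)
    (G : Set (Eu p)) (hG : MeasurableSet G) (hGC : G ⊆ C) (hGvol : 0 < volume G)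
    (γ : ℝ) (hγ : 0 ≤ γ) :
    gibbs C β F {θ | θ ∈ C ∧ sSup (F '' G) + γ < F θ} ≤
      (volume C / volume G) * ENNReal.ofReal (Real.exp (-β * γ)) := by
  classical
  have hGne : G.Nonempty := by
    by_contra h
    rw [Set.not_nonempty_iff_eq_empty] at h
    simp [h] at hGvol
  have hbddG : BddAbove (F '' G) := by
    refine ⟨B, ?_⟩
    rintro _ ⟨θ, hθ, rfl⟩
    exact (abs_le.mp (hFbdd θ (hGC hθ))).2
  set s := sSup (F '' G) with hs
  have hle : ∀ θ ∈ G, F θ ≤ s := fun θ hθ => le_csSup hbddG ⟨θ, hθ, rfl⟩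
  set f : Eu p → ℝ≥0∞ := fun θ => ENNReal.ofReal (Real.exp (-β * F θ)) with hf
  have hfmeas : Measurable f :=
    ((hFmeas.const_mul (-β)).exp).ennreal_ofReal
  set Z := ∫⁻ θ in C, f θ with hZ
  set es := ENNReal.ofReal (Real.exp (-β * s)) with hes
  set eγ := ENNReal.ofReal (Real.exp (-β * γ)) with heγ
  have hes0 : es ≠ 0 := (ENNReal.ofReal_pos.2 (Real.exp_pos _)).ne'
  have hesT : es ≠ ⊤ := ENNReal.ofReal_ne_top
  have hGfin : volume G ≠ ⊤ := (lt_of_le_of_lt (measure_mono hGC) hvolfin).ne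
  -- lower bound on Z
  have hZlow : es * volume G ≤ Z := by
    calc es * volume G = ∫⁻ _ in G, es := (setLIntegral_const G es).symm
      _ ≤ ∫⁻ θ in G, f θ := by
          refine setLIntegral_mono hfmeas (fun θ hθ => ?_)
          exact ENNReal.ofReal_le_ofReal (Real.exp_le_exp.2 (by nlinarith [hle θ hθ]))
      _ ≤ Z := lintegral_mono_set hGC
  -- the tail set
  set A := {θ | θ ∈ C ∧ s + γ < F θ} with hA
  have hAeq : A = C ∩ F ⁻¹' (Set.Ioi (s + γ)) := by
    ext θ; simp [hA, Set.mem_setOf_eq, and_comm]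
  have hAmeas : MeasurableSet A := by
    rw [hAeq]; exact hC.inter (hFmeas measurableSet_Ioi)
  have hAC : A ⊆ C := fun θ hθ => hθ.1
  -- numerator bound
  have hN : ∫⁻ θ in A, f θ ∂(volume.restrict C) ≤ es * eγ * volume C := by
    have h1 : ∫⁻ θ in A, f θ ∂(volume.restrict C) = ∫⁻ θ in A, f θ := by
      rw [Measure.restrict_restrict hAmeas, Set.inter_eq_left.mpr hAC]
    rw [h1]
    calc ∫⁻ θ in A, f θ ≤ ∫⁻ _ in A, es * eγ := by
          refine setLIntegral_mono measurable_const (fun θ hθ => ?_)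
          have hθ2 : s + γ < F θ := hθ.2
          have : Real.exp (-β * F θ) ≤ Real.exp (-β * s) * Real.exp (-β * γ) := by
            rw [← Real.exp_add]
            exact Real.exp_le_exp.2 (by nlinarith)
          calc f θ ≤ ENNReal.ofReal (Real.exp (-β * s) * Real.exp (-β * γ)) :=
                ENNReal.ofReal_le_ofReal this
            _ = es * eγ := ENNReal.ofReal_mul (Real.exp_pos _).le
      _ = es * eγ * volume A := setLIntegral_const A _
      _ ≤ es * eγ * volume C := mul_le_mul_right (measure_mono hAC) _
  -- put it together
  have hgibbs : gibbs C β F A = Z⁻¹ * ∫⁻ θ in A, f θ ∂(volume.restrict C) := by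
    rw [gibbs, Measure.smul_apply, withDensity_apply _ hAmeas, smul_eq_mul]
  rw [hgibbs]
  have hinv : Z⁻¹ ≤ (es * volume G)⁻¹ := ENNReal.inv_le_inv.2 hZlow
  calc Z⁻¹ * ∫⁻ θ in A, f θ ∂(volume.restrict C)
      ≤ (es * volume G)⁻¹ * (es * eγ * volume C) := mul_le_mul' hinv hN
    _ = (es⁻¹ * es) * ((volume G)⁻¹ * eγ * volume C) := by
        rw [ENNReal.mul_inv (Or.inl hes0) (Or.inl hesT)]; ring
    _ = volume C / volume G * eγ := by
        rw [ENNReal.inv_mul_cancel hes0 hesT, one_mul, div_eq_mul_inv]; ring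


end
end

section
/- High-probability excess-loss bound for the exponential mechanism on convex Lipschitz losses (equation (4) in the proof of Lemma 3.4, following the analysis of Bassily–Smith–Thakurta). There is a universal constant c > 0 such that the following holds. Let C ⊆ ℝ^p be a compact convex set with diameter ‖C‖ > 0 and positive Lebesgue measure, let F : C → ℝ be convex and L-Lipschitz on C, fix ε > 0 and n ≥ 1, and let μ be the Gibbs measure on C with density proportional to exp(−(εn/(2L‖C‖))·F(θ)). Then for every t ≥ 0, μ({θ ∈ C : F(θ) − min_{θ′∈C} F(θ′) > c·L‖C‖(p + t)/(2εn)}) ≤ 2^{−t}. -/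
/-! Let `x` minimise `F` on `C`. The homothety `h` of ratio `1/2` centred at `x` maps `C` into
itself and, by convexity, lowers `F` by at least `a / 2` at every point where the excess loss
exceeds the threshold `a`; there `e^{-βF} ≤ e^{-βa/2} e^{-β F ∘ h}`. Since `h` scales volume by `2^{-p}`,
integrating gives Gibbs mass at most `2^p e^{-βa/2}` for that set, and with `c = 8` we have
`βa/2 = p + t` and `2^p e^{-(p+t)} ≤ 2^{-t}`. -/

open MeasureTheory Real

noncomputable section

open AffineMap Module Set

theorem ConvexOn.map_homothety_add_le {E : Type*} [AddCommGroup E] [Module ℝ E] {C : Set E}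
    {F : E → ℝ} (hF : ConvexOn ℝ C F) {x y : E} (hx : x ∈ C) (hy : y ∈ C) {r a : ℝ}
    (hr : r ∈ Icc 0 1) (hxy : F x + a ≤ F y) :
    F (homothety x r y) + (1 - r) * a ≤ F y := by
  have hconv := hF.2 hx hy (sub_nonneg.2 hr.2) hr.1 (sub_add_cancel 1 r)
  rw [homothety_eq_lineMap, lineMap_apply_module]
  simp only [smul_eq_mul] at hconv
  nlinarith [mul_le_mul_of_nonneg_left hxy (sub_nonneg.2 hr.2)]

section Homothety

variable {E : Type*} [NormedAddCommGroup E] [NormedSpace ℝ E] [MeasurableSpace E] [BorelSpace E]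
  [FiniteDimensional ℝ E] (μ : Measure E) [μ.IsAddHaarMeasure]

theorem MeasureTheory.Measure.map_homothety_addHaar (x : E) {r : ℝ} (hr : r ≠ 0) :
    μ.map (homothety x r) = ENNReal.ofReal |(r ^ finrank ℝ E)⁻¹| • μ := by
  ext s hs
  rw [Measure.map_apply (homothety_continuous x r).measurable hs, Measure.smul_apply,
    smul_eq_mul]
  have hpre : homothety x r ⁻¹' s = homothety x r⁻¹ '' s := by
    ext y
    constructor
    · intro hy
      refine ⟨homothety x r y, hy, ?_⟩
      rw [← homothety_mul_apply, inv_mul_cancel₀ hr, homothety_one, AffineMap.id_apply]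
    · rintro ⟨z, hz, rfl⟩
      rwa [mem_preimage, ← homothety_mul_apply, mul_inv_cancel₀ hr, homothety_one,
        AffineMap.id_apply]
  rw [hpre, Measure.addHaar_image_homothety, inv_pow]

theorem MeasureTheory.lintegral_comp_homothety (x : E) {r : ℝ} (hr : r ≠ 0) (f : E → ENNReal) :
    ∫⁻ y, f (homothety x r y) ∂μ = ENNReal.ofReal |(r ^ finrank ℝ E)⁻¹| * ∫⁻ y, f y ∂μ := by
  have hemb : MeasurableEmbedding (homothety x r) :=
    (AffineEquiv.homothetyUnitsMulHom x (Units.mk0 r hr)).toContinuousAffineEquiv.toHomeomorph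
      |>.measurableEmbedding
  rw [← hemb.lintegral_map, Measure.map_homothety_addHaar μ x hr, lintegral_smul_measure,
    smul_eq_mul]

theorem MeasureTheory.setLIntegral_comp_homothety_le {C : Set E} (hC : MeasurableSet C)
    {x : E} {r : ℝ} (hr : r ≠ 0) (hCr : MapsTo (homothety x r) C C) (f : E → ENNReal) :
    ∫⁻ y in C, f (homothety x r y) ∂μ ≤
      ENNReal.ofReal |(r ^ finrank ℝ E)⁻¹| * ∫⁻ y in C, f y ∂μ := by
  rw [← lintegral_indicator hC, ← lintegral_indicator hC, ← lintegral_comp_homothety μ x hr]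
  refine lintegral_mono fun y => ?_
  by_cases hy : y ∈ C
  · simp [hy, hCr hy]
  · simp [hy]

theorem ConvexOn.setLIntegral_exp_neg_le {C S : Set E} {F : E → ℝ} (hF : ConvexOn ℝ C F)
    (hC : MeasurableSet C) (hS : MeasurableSet S) (hSC : S ⊆ C) {x : E} (hx : x ∈ C) {a β r : ℝ}
    (hSa : ∀ θ ∈ S, F x + a ≤ F θ) (hβ : 0 ≤ β) (hr : r ∈ Ioc 0 1) :
    ∫⁻ θ in S, ENNReal.ofReal (exp (-β * F θ)) ∂μ ≤
      ENNReal.ofReal ((r ^ finrank ℝ E)⁻¹ * exp (-((1 - r) * β * a))) *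
        ∫⁻ θ in C, ENNReal.ofReal (exp (-β * F θ)) ∂μ := by
  have hr0 : r ≠ 0 := hr.1.ne'
  have hmaps : MapsTo (homothety x r) C C := fun y hy => by
    rw [homothety_eq_lineMap]
    exact hF.1.lineMap_mem hx hy (Ioc_subset_Icc_self hr)
  have hpointwise : ∀ θ ∈ S, ENNReal.ofReal (exp (-β * F θ)) ≤
      ENNReal.ofReal (exp (-((1 - r) * β * a))) *
        ENNReal.ofReal (exp (-β * F (homothety x r θ))) := by
    intro θ hθ
    have := hF.map_homothety_add_le hx (hSC hθ) (Ioc_subset_Icc_self hr) (hSa θ hθ)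
    rw [← ENNReal.ofReal_mul (exp_nonneg _), ← exp_add]
    gcongr
    nlinarith
  calc ∫⁻ θ in S, ENNReal.ofReal (exp (-β * F θ)) ∂μ
      ≤ ∫⁻ θ in S, ENNReal.ofReal (exp (-((1 - r) * β * a))) *
          ENNReal.ofReal (exp (-β * F (homothety x r θ))) ∂μ :=
        setLIntegral_mono' hS hpointwise
    _ ≤ ENNReal.ofReal (exp (-((1 - r) * β * a))) *
          ∫⁻ θ in C, ENNReal.ofReal (exp (-β * F (homothety x r θ))) ∂μ := by
        rw [lintegral_const_mul' _ _ ENNReal.ofReal_ne_top]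
        gcongr
    _ ≤ ENNReal.ofReal (exp (-((1 - r) * β * a))) *
          (ENNReal.ofReal |(r ^ finrank ℝ E)⁻¹| *
            ∫⁻ θ in C, ENNReal.ofReal (exp (-β * F θ)) ∂μ) := by
        gcongr
        exact setLIntegral_comp_homothety_le μ hC hr0 hmaps _
    _ = _ := by
        rw [← mul_assoc, ← ENNReal.ofReal_mul (exp_nonneg _),
          abs_of_pos (inv_pos.2 (pow_pos hr.1 _)), mul_comm (exp (-((1 - r) * β * a)))]

end Homothety

theorem ContinuousOn.measurableSet_setOf_mem_and_lt {α : Type*} [TopologicalSpace α]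
    [MeasurableSpace α] [OpensMeasurableSpace α] {C : Set α} {f : α → ℝ} (hf : ContinuousOn f C)
    (hC : MeasurableSet C) (c : ℝ) : MeasurableSet {θ | θ ∈ C ∧ c < f θ} := by
  obtain ⟨u, hu, hfu⟩ := continuousOn_iff'.1 hf (Ioi c) isOpen_Ioi
  have hset : {θ | θ ∈ C ∧ c < f θ} = u ∩ C := by
    rw [← hfu]
    ext θ
    simp [and_comm]
  rw [hset]
  exact hu.measurableSet.inter hC

theorem gibbs_le_of_setLIntegral_le {p : ℕ} {C S : Set (Eu p)} (hSC : S ⊆ C) {β : ℝ}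
    {F : Eu p → ℝ} {K : ENNReal}
    (h : ∫⁻ θ in S, ENNReal.ofReal (exp (-β * F θ)) ≤
      K * ∫⁻ θ in C, ENNReal.ofReal (exp (-β * F θ))) :
    gibbs C β F S ≤ K := by
  rw [gibbs, Measure.smul_apply, smul_eq_mul, withDensity_apply',
    Measure.restrict_restrict_of_subset hSC]
  set Z := ∫⁻ θ in C, ENNReal.ofReal (exp (-β * F θ))
  calc Z⁻¹ * ∫⁻ θ in S, ENNReal.ofReal (exp (-β * F θ))
      ≤ Z⁻¹ * (K * Z) := by gcongr
    _ = K * (Z⁻¹ * Z) := by ring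
    _ ≤ K := mul_le_of_le_one_right' (ENNReal.inv_mul_le_one Z)

theorem exp_neg_le_two_rpow_neg {x : ℝ} (hx : 0 ≤ x) : exp (-x) ≤ 2 ^ (-x) := by
  rw [← exp_one_rpow]
  exact rpow_le_rpow_of_nonpos two_pos (by linarith [add_one_le_exp 1]) (neg_nonpos.2 hx)

theorem inv_half_pow_mul_exp_neg_le (p : ℕ) {t : ℝ} (ht : 0 ≤ t) :
    ((1 / 2 : ℝ) ^ p)⁻¹ * exp (-(p + t)) ≤ 2 ^ (-t) := by
  rw [one_div, inv_pow, inv_inv, ← rpow_natCast, show -t = p + -(p + t) by ring,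
    rpow_add two_pos]
  gcongr
  exact exp_neg_le_two_rpow_neg (by positivity)

/-- high-probability excess-loss bound for the exponential mechanism
on convex Lipschitz losses. -/
theorem exponential_mechanism_excess_loss_tail :
    ∃ c : ℝ, 0 < c ∧
      ∀ (p n : ℕ), 1 ≤ p → 1 ≤ n →
      ∀ (C : Set (Eu p)), IsCompact C → Convex ℝ C →
        0 < Metric.diam C → 0 < volume C →
      ∀ (F : Eu p → ℝ), ConvexOn ℝ C F →
      ∀ (L : ℝ), 0 < L → LipschitzOnWith L.toNNReal F C →
      ∀ (ε : ℝ), 0 < ε →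
      ∀ (t : ℝ), 0 ≤ t →
        gibbs C (ε * n / (2 * L * Metric.diam C)) F
            {θ | θ ∈ C ∧
              c * L * Metric.diam C * (p + t) / (2 * ε * n) < F θ - sInf (F '' C)} ≤
          ENNReal.ofReal ((2 : ℝ) ^ (-t)) := by
  refine ⟨8, by norm_num, fun p n _ hn C hC _ hD hvol F hF L hL hFL ε hε t ht => ?_⟩
  have hFc : ContinuousOn F C := hFL.continuousOn
  obtain ⟨x, hxC, hxmin⟩ := hC.exists_isMinOn (nonempty_of_measure_ne_zero hvol.ne') hFc
  have hinf : sInf (F '' C) = F x :=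
    IsLeast.csInf_eq ⟨mem_image_of_mem F hxC, forall_mem_image.2 hxmin⟩
  set β := ε * n / (2 * L * Metric.diam C)
  set a := 8 * L * Metric.diam C * (p + t) / (2 * ε * n)
  have hn' : (0 : ℝ) < n := by exact_mod_cast hn
  have hβa : (1 - 1 / 2) * β * a = p + t := by
    simp only [β, a]
    field_simp
    ring
  have hS : MeasurableSet {θ | θ ∈ C ∧ a < F θ - F x} :=
    (hFc.sub continuousOn_const).measurableSet_setOf_mem_and_lt hC.measurableSet a
  rw [hinf]
  refine gibbs_le_of_setLIntegral_le (fun θ hθ => hθ.1) ?_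
  refine (hF.setLIntegral_exp_neg_le volume hC.measurableSet hS (fun θ hθ => hθ.1) hxC
    (a := a) (fun θ hθ => by linarith [hθ.2]) (by positivity)
    (r := 1 / 2) ⟨by norm_num, by norm_num⟩).trans ?_
  gcongr
  rw [hβa, finrank_euclideanSpace_fin]
  exact inv_half_pow_mul_exp_neg_le p ht

end
end

section
/- Lemma 3.4 (concentration of the exponential mechanism around the constrained minimizer under strong convexity). There is a universal constant c > 0 such that the following holds. Let C ⊆ ℝ^p be a compact convex set with diameter ‖C‖ > 0 and positive Lebesgue measure, let F : C → ℝ be m-strongly convex and L-Lipschitz on C, let θ* be the minimizer of F over C, fix ε > 0 and n ≥ 1, and let μ be the Gibbs measure on C with density proportional to exp(−(εn/(2L‖C‖))·F(θ)). Then for every t ≥ 0, μ({θ ∈ C : ‖θ − θ*‖ ≤ sqrt(c·L(p + t)‖C‖/(m ε n))}) ≥ 1 − 2^{−t}. -/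
/-!
Strong convexity gives quadratic growth `F θ ≥ F θstar + m/2 ‖θ - θstar‖²`, so it suffices to
bound the Gibbs mass of `{F > F θstar + 2γ}` where `βγ = (2p + t + 1) log 2`. Since `F` is
convex, the homothety of ratio `1/k` centred at `θstar` maps the sublevel set
`{F ≤ F θstar + kγ}` into `{F ≤ F θstar + γ}`, so these sublevel sets grow at most like `k^p`
in volume, while on the shell `{(k-1)γ < F - F θstar ≤ kγ}` the Gibbs density is smaller than
on `{F ≤ F θstar + γ}` by the factor `exp (-(k-2)βγ)`. Summing over the shells gives a
geometric series bounded by `2^(-t)`.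
-/

open MeasureTheory Real

noncomputable section

open Set Filter Topology Module
open scoped ENNReal

section Convex

variable {E : Type*} [NormedAddCommGroup E] [NormedSpace ℝ E] {s : Set E} {f : E → ℝ} {x y : E}

theorem UniformConvexOn.add_le_of_isMinOn {φ : ℝ → ℝ} (hf : UniformConvexOn s φ f)
    (hxs : x ∈ s) (hx : IsMinOn f s x) (hy : y ∈ s) : f x + φ ‖y - x‖ ≤ f y := by
  have hseg : ∀ l ∈ Ioc (0 : ℝ) 1, (1 - l) * φ ‖y - x‖ ≤ f y - f x := fun l ⟨hl₀, hl₁⟩ => by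
    have hconv := hf.2 hy hxs hl₀.le (sub_nonneg.2 hl₁) (add_sub_cancel l 1)
    have hmin := isMinOn_iff.1 hx _ (hf.1 hy hxs hl₀.le (sub_nonneg.2 hl₁) (add_sub_cancel l 1))
    simp only [smul_eq_mul] at hconv
    nlinarith
  have hlim : Tendsto (fun l : ℝ => (1 - l) * φ ‖y - x‖) (𝓝[>] 0) (𝓝 (φ ‖y - x‖)) :=
    tendsto_nhdsWithin_of_tendsto_nhds <|
      (by fun_prop : Continuous fun l : ℝ => (1 - l) * φ ‖y - x‖).tendsto' 0 _ (by simp)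
  have := le_of_tendsto hlim (eventually_of_mem (Ioc_mem_nhdsGT one_pos) hseg)
  linarith

theorem ConvexOn.image_homothety_subset (hf : ConvexOn ℝ s f) (hx : x ∈ s) {r : ℝ}
    (hr₀ : 0 ≤ r) (hr₁ : r ≤ 1) (c : ℝ) :
    AffineMap.homothety x r '' {y ∈ s | f y ≤ f x + c} ⊆ {y ∈ s | f y ≤ f x + r * c} := by
  rintro _ ⟨y, ⟨hy, hfy⟩, rfl⟩
  rw [AffineMap.homothety_eq_lineMap, AffineMap.lineMap_apply_module]
  have hle := hf.2 hx hy (sub_nonneg.2 hr₁) hr₀ (sub_add_cancel 1 r)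
  simp only [smul_eq_mul] at hle
  exact ⟨hf.1 hx hy (sub_nonneg.2 hr₁) hr₀ (sub_add_cancel 1 r), by nlinarith⟩

theorem ConvexOn.addHaar_sublevel_le [MeasurableSpace E] [BorelSpace E] [FiniteDimensional ℝ E]
    (μ : Measure E) [μ.IsAddHaarMeasure] (hf : ConvexOn ℝ s f) (hx : x ∈ s) {k : ℝ} (hk : 1 ≤ k)
    (c : ℝ) :
    μ {y ∈ s | f y ≤ f x + k * c} ≤
      ENNReal.ofReal (k ^ finrank ℝ E) * μ {y ∈ s | f y ≤ f x + c} := by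
  have hk₀ : 0 < k := one_pos.trans_le hk
  have hshrink : ENNReal.ofReal ((k⁻¹) ^ finrank ℝ E) * μ {y ∈ s | f y ≤ f x + k * c} ≤
      μ {y ∈ s | f y ≤ f x + c} := by
    have himage :=
      hf.image_homothety_subset hx (inv_nonneg.2 hk₀.le) (inv_le_one_of_one_le₀ hk) (k * c)
    rw [inv_mul_cancel_left₀ hk₀.ne'] at himage
    calc _ = μ (AffineMap.homothety x k⁻¹ '' {y ∈ s | f y ≤ f x + k * c}) := by
          rw [Measure.addHaar_image_homothety, abs_of_nonneg (by positivity)]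
      _ ≤ _ := measure_mono himage
  calc μ {y ∈ s | f y ≤ f x + k * c}
      = ENNReal.ofReal (k ^ finrank ℝ E) *
          (ENNReal.ofReal ((k⁻¹) ^ finrank ℝ E) * μ {y ∈ s | f y ≤ f x + k * c}) := by
        rw [← mul_assoc, ← ENNReal.ofReal_mul (by positivity), ← mul_pow,
          mul_inv_cancel₀ hk₀.ne', one_pow, ENNReal.ofReal_one, one_mul]
    _ ≤ _ := by gcongr

end Convex

theorem setOf_add_two_mul_lt_subset_iUnion {α : Type*} {s : Set α} {f : α → ℝ} {a γ : ℝ}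
    (hγ : 0 < γ) :
    {y ∈ s | a + 2 * γ < f y} ⊆
      ⋃ j : ℕ, {y ∈ s | f y ≤ a + (j + 3) * γ} \ {y ∈ s | f y ≤ a + (j + 2) * γ} := by
  rintro y ⟨hy, hlt⟩
  set w := (f y - a) / γ
  have hw : 2 < w := by rw [lt_div_iff₀ hγ]; linarith
  have hceil : 2 < ⌈w⌉₊ := by exact_mod_cast hw.trans_le (Nat.le_ceil w)
  obtain ⟨j, hj⟩ : ∃ j : ℕ, ⌈w⌉₊ = j + 3 := ⟨⌈w⌉₊ - 3, by omega⟩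
  have hle : w ≤ j + 3 := by exact_mod_cast hj ▸ Nat.le_ceil w
  have hlt' : (j : ℝ) + 2 < w := by
    have := Nat.ceil_lt_add_one (by positivity : 0 ≤ w)
    rw [hj] at this
    push_cast at this
    linarith
  refine mem_iUnion.2 ⟨j, ⟨hy, ?_⟩, fun h => ?_⟩
  · rw [div_le_iff₀ hγ] at hle
    linarith
  · rw [lt_div_iff₀ hγ] at hlt'
    linarith [h.2]

theorem setLIntegral_ofReal_exp_le {α : Type*} [MeasurableSpace α] {μ : Measure α} {g : α → ℝ}
    {X : Set α} {u : ℝ} (hX : MeasurableSet X) (hg : ∀ x ∈ X, g x ≤ u) :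
    ∫⁻ x in X, ENNReal.ofReal (exp (g x)) ∂μ ≤ ENNReal.ofReal (exp u) * μ X :=
  (setLIntegral_mono' hX fun x hx => ENNReal.ofReal_le_ofReal (exp_le_exp.2 (hg x hx))).trans_eq
    (setLIntegral_const X _)

theorem ofReal_exp_mul_le_setLIntegral {α : Type*} [MeasurableSpace α] {μ : Measure α}
    {g : α → ℝ} {X : Set α} {u : ℝ} (hX : MeasurableSet X) (hg : ∀ x ∈ X, u ≤ g x) :
    ENNReal.ofReal (exp u) * μ X ≤ ∫⁻ x in X, ENNReal.ofReal (exp (g x)) ∂μ :=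
  (setLIntegral_const X _).symm.trans_le
    (setLIntegral_mono' hX fun x hx => ENNReal.ofReal_le_ofReal (exp_le_exp.2 (hg x hx)))

theorem add_three_pow_le_two_pow (j p : ℕ) : ((j : ℝ) + 3) ^ p ≤ 2 ^ (2 * p * (j + 1)) := by
  have hbase : (j : ℝ) + 3 ≤ 4 ^ (j + 1) := by
    have := one_add_mul_le_pow (show (-2 : ℝ) ≤ 3 by norm_num) (j + 1)
    norm_num at this
    linarith
  calc ((j : ℝ) + 3) ^ p ≤ (4 ^ (j + 1)) ^ p := by gcongr
    _ = 2 ^ (2 * p * (j + 1)) := by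
      rw [show (4 : ℝ) = 2 ^ 2 by norm_num, ← pow_mul, ← pow_mul]
      ring_nf

theorem exp_neg_mul_mul_add_three_pow_le (j p : ℕ) {t κ : ℝ} (ht : 0 ≤ t)
    (hκ : (2 * p + t + 1) * log 2 ≤ κ) :
    exp (-((j + 1) * κ)) * ((j : ℝ) + 3) ^ p ≤ 2 ^ (-t) * 2⁻¹ ^ (j + 1) := by
  have hlog : 0 < log 2 := log_pos one_lt_two
  calc exp (-((j + 1) * κ)) * ((j : ℝ) + 3) ^ p
      ≤ (2 : ℝ) ^ (-((j + 1) * (2 * p + t + 1))) * (2 : ℝ) ^ ((2 * p * (j + 1) : ℕ) : ℝ) := by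
        rw [rpow_natCast]
        gcongr
        · rw [rpow_def_of_pos two_pos, exp_le_exp]
          nlinarith
        · exact add_three_pow_le_two_pow j p
    _ = 2 ^ (-((j + 1) * (t + 1))) := by
        rw [← rpow_add two_pos]
        push_cast
        ring_nf
    _ ≤ 2 ^ (-(t + (j + 1))) := rpow_le_rpow_of_exponent_le one_le_two (by nlinarith)
    _ = 2 ^ (-t) * 2⁻¹ ^ (j + 1) := by
        rw [neg_add, rpow_add two_pos, rpow_neg two_pos.le (_ + 1), inv_pow]
        norm_cast

section Gibbs

variable {p : ℕ} {C X Y : Set (Eu p)} {β : ℝ} {F : Eu p → ℝ}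

theorem gibbs_apply_of_subset (hX : MeasurableSet X) (hXC : X ⊆ C) :
    gibbs C β F X = (∫⁻ θ in C, ENNReal.ofReal (exp (-β * F θ)))⁻¹ *
      ∫⁻ θ in X, ENNReal.ofReal (exp (-β * F θ)) := by
  rw [gibbs, Measure.smul_apply, smul_eq_mul, withDensity_apply _ hX,
    Measure.restrict_restrict hX, inter_eq_self_of_subset_left hXC]

theorem gibbs_self_eq_one (hC : IsCompact C) (hC₀ : volume C ≠ 0) (hF : ContinuousOn F C) :
    gibbs C β F C = 1 := by
  have hCne : C.Nonempty := nonempty_of_measure_ne_zero hC₀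
  have hg : ContinuousOn (fun θ => -β * F θ) C := continuousOn_const.mul hF
  obtain ⟨θ₀, -, hθ₀⟩ := hC.exists_isMinOn hCne hg
  obtain ⟨θ₁, -, hθ₁⟩ := hC.exists_isMaxOn hCne hg
  rw [gibbs_apply_of_subset hC.measurableSet subset_rfl]
  refine ENNReal.inv_mul_cancel (ne_of_gt ?_) (ne_of_lt ?_)
  · calc 0 < ENNReal.ofReal (exp (-β * F θ₀)) * volume C :=
          ENNReal.mul_pos (by simpa using exp_pos _) hC₀
      _ ≤ _ := ofReal_exp_mul_le_setLIntegral hC.measurableSet (isMinOn_iff.1 hθ₀)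
  · calc _ ≤ ENNReal.ofReal (exp (-β * F θ₁)) * volume C :=
          setLIntegral_ofReal_exp_le hC.measurableSet (isMaxOn_iff.1 hθ₁)
      _ < ⊤ := ENNReal.mul_lt_top ENNReal.ofReal_lt_top hC.measure_lt_top

theorem gibbs_le_ofReal_exp_mul_div (hβ : 0 ≤ β) (hX : MeasurableSet X) (hXC : X ⊆ C)
    (hY : MeasurableSet Y) (hYC : Y ⊆ C) {a b : ℝ} (hXa : ∀ θ ∈ X, a ≤ F θ)
    (hYb : ∀ θ ∈ Y, F θ ≤ b) :
    gibbs C β F X ≤ ENNReal.ofReal (exp (-β * (a - b))) * volume X / volume Y := by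
  have hZ : ENNReal.ofReal (exp (-β * b)) * volume Y ≤
      ∫⁻ θ in C, ENNReal.ofReal (exp (-β * F θ)) :=
    (ofReal_exp_mul_le_setLIntegral hY fun θ hθ => by nlinarith [hYb θ hθ]).trans
      (lintegral_mono_set hYC)
  have hIX : ∫⁻ θ in X, ENNReal.ofReal (exp (-β * F θ)) ≤
      ENNReal.ofReal (exp (-β * a)) * volume X :=
    setLIntegral_ofReal_exp_le hX fun θ hθ => by nlinarith [hXa θ hθ]
  rw [gibbs_apply_of_subset hX hXC]
  calc _ ≤ (ENNReal.ofReal (exp (-β * b)) * volume Y)⁻¹ *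
        (ENNReal.ofReal (exp (-β * a)) * volume X) := by gcongr
    _ = _ := by
      rw [ENNReal.mul_inv (Or.inl (by simpa using exp_pos _)) (Or.inl ENNReal.ofReal_ne_top),
        ← ENNReal.ofReal_inv_of_pos (exp_pos _), ← exp_neg, div_eq_mul_inv, mul_right_comm,
        ← mul_assoc, ← ENNReal.ofReal_mul (exp_pos _).le, ← exp_add]
      ring_nf

theorem gibbs_shell_le (hC : IsClosed C) (hF : ConvexOn ℝ C F) (hFc : ContinuousOn F C)
    {x : Eu p} (hx : x ∈ C) {t γ : ℝ} (ht : 0 ≤ t) (hβ : 0 ≤ β)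
    (hβγ : (2 * p + t + 1) * log 2 ≤ β * γ) (j : ℕ) :
    gibbs C β F ({θ ∈ C | F θ ≤ F x + (j + 3) * γ} \ {θ ∈ C | F θ ≤ F x + (j + 2) * γ}) ≤
      ENNReal.ofReal (2 ^ (-t)) * 2⁻¹ ^ (j + 1) := by
  set A : ℝ → Set (Eu p) := fun k => {θ ∈ C | F θ ≤ F x + k * γ}
  have hA : ∀ k, MeasurableSet (A k) := fun k =>
    (hFc.preimage_isClosed_of_isClosed hC isClosed_Iic).measurableSet
  have hvol : volume (A (j + 3)) ≤ ENNReal.ofReal (((j : ℝ) + 3) ^ p) * volume (A 1) := by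
    simpa [A, finrank_euclideanSpace_fin] using
      hF.addHaar_sublevel_le volume hx (k := j + 3) (by linarith) γ
  calc gibbs C β F (A (j + 3) \ A (j + 2))
      ≤ ENNReal.ofReal (exp (-β * ((F x + (j + 2) * γ) - (F x + 1 * γ)))) *
          volume (A (j + 3) \ A (j + 2)) / volume (A 1) :=
        gibbs_le_ofReal_exp_mul_div hβ ((hA _).diff (hA _)) (sdiff_subset.trans (sep_subset _ _))
          (hA 1) (sep_subset _ _) (fun θ hθ => (not_le.1 fun h => hθ.2 ⟨hθ.1.1, h⟩).le)
          fun θ hθ => hθ.2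
    _ ≤ ENNReal.ofReal (exp (-((j + 1) * (β * γ)))) * ENNReal.ofReal (((j : ℝ) + 3) ^ p) := by
        rw [mul_div_assoc]
        gcongr
        · exact le_of_eq (by ring)
        · exact ENNReal.div_le_of_le_mul ((measure_mono sdiff_subset).trans hvol)
    _ = ENNReal.ofReal (exp (-((j + 1) * (β * γ))) * ((j : ℝ) + 3) ^ p) :=
        (ENNReal.ofReal_mul (exp_pos _).le).symm
    _ ≤ ENNReal.ofReal (2 ^ (-t) * 2⁻¹ ^ (j + 1)) :=
        ENNReal.ofReal_le_ofReal (exp_neg_mul_mul_add_three_pow_le j p ht hβγ)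
    _ = ENNReal.ofReal (2 ^ (-t)) * 2⁻¹ ^ (j + 1) := by
        rw [ENNReal.ofReal_mul (by positivity), ENNReal.ofReal_pow (by norm_num),
          ENNReal.ofReal_inv_of_pos two_pos, ENNReal.ofReal_ofNat]

theorem gibbs_excess_le_two_rpow_neg (hC : IsClosed C) (hF : ConvexOn ℝ C F)
    (hFc : ContinuousOn F C) {x : Eu p} (hx : x ∈ C) {t γ : ℝ} (ht : 0 ≤ t) (hγ : 0 < γ)
    (hβγ : (2 * p + t + 1) * log 2 ≤ β * γ) :
    gibbs C β F {θ ∈ C | F x + 2 * γ < F θ} ≤ ENNReal.ofReal (2 ^ (-t)) := by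
  have hβ : 0 ≤ β :=
    (pos_of_mul_pos_left ((by positivity : 0 < (2 * p + t + 1) * log 2).trans_le hβγ) hγ.le).le
  calc gibbs C β F {θ ∈ C | F x + 2 * γ < F θ}
      ≤ ∑' j : ℕ, gibbs C β F
          ({θ ∈ C | F θ ≤ F x + (j + 3) * γ} \ {θ ∈ C | F θ ≤ F x + (j + 2) * γ}) :=
        (measure_mono (setOf_add_two_mul_lt_subset_iUnion hγ)).trans (measure_iUnion_le _)
    _ ≤ ∑' j : ℕ, ENNReal.ofReal (2 ^ (-t)) * 2⁻¹ ^ (j + 1) :=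
        ENNReal.tsum_le_tsum (gibbs_shell_le hC hF hFc hx ht hβ hβγ)
    _ = ENNReal.ofReal (2 ^ (-t)) := by
        rw [ENNReal.tsum_mul_left, ENNReal.tsum_geometric_add_one, ENNReal.one_sub_inv_two,
          inv_inv, ENNReal.inv_mul_cancel two_ne_zero ENNReal.ofNat_ne_top, mul_one]

end Gibbs

/-- Lemma 3.4: concentration of the exponential mechanism around the
constrained minimizer of an `m`-strongly convex, `L`-Lipschitz loss. -/
theorem exponential_mechanism_concentration_strongly_convex :
    ∃ c : ℝ, 0 < c ∧
      ∀ (p n : ℕ), 1 ≤ p → 1 ≤ n →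
      ∀ (C : Set (Eu p)), IsCompact C → Convex ℝ C →
        0 < Metric.diam C → 0 < volume C →
      ∀ (F : Eu p → ℝ) (m : ℝ), 0 < m →
        -- `m`-strong convexity of `F` on `C`: `F - (m/2)‖·‖²` is convex on `C`
        ConvexOn ℝ C (fun θ => F θ - m / 2 * ‖θ‖ ^ 2) →
      ∀ (L : ℝ), 0 < L → LipschitzOnWith L.toNNReal F C →
      ∀ (θstar : Eu p), θstar ∈ C → (∀ θ ∈ C, F θstar ≤ F θ) →
      ∀ (ε : ℝ), 0 < ε →
      ∀ (t : ℝ), 0 ≤ t →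
        1 - ENNReal.ofReal ((2 : ℝ) ^ (-t)) ≤
          gibbs C (ε * n / (2 * L * Metric.diam C)) F
            {θ | θ ∈ C ∧
              ‖θ - θstar‖ ≤ Real.sqrt (c * L * (p + t) * Metric.diam C / (m * ε * n))} := by
  refine ⟨32, by norm_num, ?_⟩
  intro p n hp hn C hC _ hdiam hvol F m hm hconv L hL hlip θstar hθstar hmin ε hε t ht
  set D := Metric.diam C
  set β := ε * n / (2 * L * D)
  set γ := (2 * p + t + 1) * log 2 / β
  set r := sqrt (32 * L * (p + t) * D / (m * ε * n))
  set S := {θ | θ ∈ C ∧ ‖θ - θstar‖ ≤ r}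
  have hn₀ : (0 : ℝ) < n := by exact_mod_cast hn
  have hp₁ : (1 : ℝ) ≤ p := by exact_mod_cast hp
  have hβ : 0 < β := by positivity
  have hstrong : StrongConvexOn C m F := strongConvexOn_iff_convex.2 hconv
  have hradius : 2 * γ ≤ m / 2 * r ^ 2 := by
    have hlog := log_lt_sub_one_of_pos two_pos (by norm_num)
    calc 2 * γ = 4 * ((2 * p + t + 1) * log 2) * (L * D / (ε * n)) := by
          simp only [γ, β]; field_simp; ring
      _ ≤ 16 * (p + t) * (L * D / (ε * n)) :=
          mul_le_mul_of_nonneg_right (by nlinarith) (by positivity)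
      _ = m / 2 * r ^ 2 := by rw [sq_sqrt (by positivity)]; field_simp; ring
  have hfar : C \ S ⊆ {θ ∈ C | F θstar + 2 * γ < F θ} := by
    rintro θ ⟨hθ, hθS⟩
    have hgrowth := UniformConvexOn.add_le_of_isMinOn hstrong hθstar (isMinOn_iff.2 hmin) hθ
    have hr : r < ‖θ - θstar‖ := lt_of_not_ge fun h => hθS ⟨hθ, h⟩
    refine ⟨hθ, ?_⟩
    nlinarith [pow_lt_pow_left₀ hr (sqrt_nonneg _) two_ne_zero]
  have htail := gibbs_excess_le_two_rpow_neg hC.isClosed (hstrong.strictConvexOn hm).convexOn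
    hlip.continuousOn hθstar ht (by positivity) (mul_div_cancel₀ _ hβ.ne').ge
  rw [tsub_le_iff_right, ← gibbs_self_eq_one hC hvol.ne' hlip.continuousOn]
  calc gibbs C β F C ≤ gibbs C β F (C ∩ S) + gibbs C β F (C \ S) := measure_le_inter_add_sdiff _ _ _
    _ ≤ gibbs C β F S + ENNReal.ofReal (2 ^ (-t)) :=
        add_le_add (measure_mono inter_subset_right) ((measure_mono hfar).trans htail)

end
end

section
/- Utility of the exponential mechanism for convex losses (utility part of Theorem 3.1). There is a universal constant c > 0 such that the following holds. Let C ⊆ ℝ^p be a compact convex set with diameter ‖C‖ > 0 and positive Lebesgue measure, and suppose that for every d ∈ τ the map θ ↦ ℓ(θ; d) is convex and L-Lipschitz on C. Fix ε > 0, a dataset D of size n, and let μ_D be the Gibbs measure on C with density proportional to exp(−(εn/(2L‖C‖))·𝓛(θ; D)). Then E_{θ ∼ μ_D}[𝓛(θ; D)] − min_{θ ∈ C} 𝓛(θ; D) ≤ c · Lp‖C‖/(εn). -/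
/-!
Let `F` be convex and continuous on the convex body `C ⊆ ℝᵖ`, `x₀ ∈ C`, and
`Z = ∫_C e^{-βF}`, `J = ∫_C (F - F x₀) e^{-βF}`. The homothety with centre `x₀` and ratio
`s ∈ (0, 1)` maps `C` into itself with Jacobian `sᵖ`, and convexity gives
`F (x₀ + s (x - x₀)) ≤ (1 - s) F x₀ + s F x`. Comparing `Z` with the integral of `e^{-βF}` over
the shrunken copy of `C` and using `eᵗ ≥ 1 + t` yields `sᵖ (Z + β (1 - s) J) ≤ Z`; dividing by
`1 - s` and letting `s → 1` gives `β J ≤ p Z`. With `x₀` a minimiser, `J / Z` is the excess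
Gibbs risk, so it is at most `p / β`, which for `β = εn / (2L‖C‖)` is `2Lp‖C‖ / (εn)`.
-/

open MeasureTheory Real

noncomputable section

open Set Filter Topology Module

theorem le_natCast_mul_of_forall_pow_mul_le {a b : ℝ} (d : ℕ)
    (h : ∀ s ∈ Ioo (0 : ℝ) 1, s ^ d * (b + (1 - s) * a) ≤ b) : a ≤ d * b := by
  have hgeom : ∀ s ∈ Ioo (0 : ℝ) 1, s ^ d * a ≤ (∑ i ∈ Finset.range d, s ^ i) * b := by
    intro s hs
    have hsum : (∑ i ∈ Finset.range d, s ^ i) * b * (1 - s) = b - s ^ d * b := by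
      rw [mul_right_comm, geom_sum_mul_neg]; ring
    refine le_of_mul_le_mul_right ?_ (sub_pos.2 hs.2)
    linarith [h s hs]
  have hlim : ∀ f : ℝ → ℝ, Continuous f → Tendsto f (𝓝[Ioo 0 1] 1) (𝓝 (f 1)) :=
    fun f hf => hf.continuousWithinAt.tendsto
  have : (𝓝[Ioo (0 : ℝ) 1] 1).NeBot := right_nhdsWithin_Ioo_neBot one_pos
  simpa using le_of_tendsto_of_tendsto (hlim (fun s => s ^ d * a) (by fun_prop))
    (hlim (fun s => (∑ i ∈ Finset.range d, s ^ i) * b) (by fun_prop))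
    (eventually_nhdsWithin_of_forall hgeom)

section Homothety

variable {E F : Type*} [NormedAddCommGroup E] [NormedSpace ℝ E]

theorem hasFDerivAt_homothety (c : E) (r : ℝ) (x : E) :
    HasFDerivAt (AffineMap.homothety c r : E → E) (r • ContinuousLinearMap.id ℝ E) x := by
  rw [show ⇑(AffineMap.homothety c r) = fun y => r • (y - c) + c from
    funext (AffineMap.homothety_apply c r)]
  exact (((hasFDerivAt_id (𝕜 := ℝ) x).sub_const c).const_smul r).add_const c

variable [FiniteDimensional ℝ E] [MeasurableSpace E] [BorelSpace E] (μ : Measure E)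
  [μ.IsAddHaarMeasure] [NormedAddCommGroup F] [NormedSpace ℝ F]

theorem setIntegral_image_homothety {s : Set E} (hs : MeasurableSet s) (c : E) {r : ℝ}
    (hr : r ≠ 0) (f : E → F) :
    ∫ x in AffineMap.homothety c r '' s, f x ∂μ =
      |r| ^ finrank ℝ E • ∫ x in s, f (AffineMap.homothety c r x) ∂μ := by
  rw [integral_image_eq_integral_abs_det_fderiv_smul μ hs
    (fun x _ => (hasFDerivAt_homothety c r x).hasFDerivWithinAt)
    (AffineMap.homothety_injective c hr).injOn, integral_smul]
  simp [ContinuousLinearMap.det, LinearMap.det_smul, abs_pow]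

end Homothety

section ConvexPotential

variable {E : Type*} [NormedAddCommGroup E] [NormedSpace ℝ E] {C : Set E} {F : E → ℝ} {x₀ : E}
  {β : ℝ}

theorem ConvexOn.comp_homothety_le (hF : ConvexOn ℝ C F) (hx₀ : x₀ ∈ C) {s : ℝ}
    (hs : s ∈ Icc (0 : ℝ) 1) {x : E} (hx : x ∈ C) :
    F (AffineMap.homothety x₀ s x) ≤ (1 - s) * F x₀ + s * F x := by
  have := hF.2 hx₀ hx (sub_nonneg.2 hs.2) hs.1 (sub_add_cancel 1 s)
  rwa [AffineMap.homothety_eq_lineMap, AffineMap.lineMap_apply_module]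

theorem ConvexOn.exp_neg_mul_le_comp_homothety (hF : ConvexOn ℝ C F) (hx₀ : x₀ ∈ C)
    (hβ : 0 ≤ β) {s : ℝ} (hs : s ∈ Icc (0 : ℝ) 1) {x : E} (hx : x ∈ C) :
    exp (-β * F x) * (1 + β * (1 - s) * (F x - F x₀)) ≤
      exp (-β * F (AffineMap.homothety x₀ s x)) :=
  calc exp (-β * F x) * (1 + β * (1 - s) * (F x - F x₀))
      ≤ exp (-β * F x) * exp (β * (1 - s) * (F x - F x₀)) := by
        gcongr; linarith [add_one_le_exp (β * (1 - s) * (F x - F x₀))]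
    _ = exp (-β * ((1 - s) * F x₀ + s * F x)) := by rw [← exp_add]; ring_nf
    _ ≤ exp (-β * F (AffineMap.homothety x₀ s x)) :=
        exp_le_exp.2 <| mul_le_mul_of_nonpos_left
          (hF.comp_homothety_le hx₀ hs hx) (neg_nonpos.2 hβ)

variable [FiniteDimensional ℝ E] [MeasurableSpace E] [BorelSpace E] (μ : Measure E)
  [μ.IsAddHaarMeasure]

theorem ConvexOn.mul_setIntegral_exp_mul_sub_le (hC : IsCompact C) (hFc : ContinuousOn F C)
    (hF : ConvexOn ℝ C F) (hx₀ : x₀ ∈ C) (hβ : 0 ≤ β) :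
    β * ∫ x in C, exp (-β * F x) * (F x - F x₀) ∂μ ≤
      finrank ℝ E * ∫ x in C, exp (-β * F x) ∂μ := by
  set g : E → ℝ := fun x => exp (-β * F x)
  have hg : ContinuousOn g C := by fun_prop
  have hgF : ContinuousOn (fun x => g x * (F x - F x₀)) C := by fun_prop
  apply le_natCast_mul_of_forall_pow_mul_le
  intro s hs
  set T := AffineMap.homothety x₀ s
  have hTC : MapsTo T C C := fun x hx => by
    rw [AffineMap.homothety_eq_lineMap]
    exact hF.1.lineMap_mem hx₀ hx (Ioo_subset_Icc_self hs)
  have hgT : ContinuousOn (fun x => g (T x)) C :=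
    hg.comp (AffineMap.homothety_continuous x₀ s).continuousOn hTC
  set Z := ∫ x in C, g x ∂μ
  set J := ∫ x in C, g x * (F x - F x₀) ∂μ
  have hlin : ∫ x in C, g x * (1 + β * (1 - s) * (F x - F x₀)) ∂μ = Z + (1 - s) * (β * J) := by
    have hsplit : ∀ x, g x * (1 + β * (1 - s) * (F x - F x₀)) =
        g x + (1 - s) * β * (g x * (F x - F x₀)) := fun x => by ring
    simp_rw [hsplit]
    rw [integral_add (hg.integrableOn_compact hC) ((hgF.integrableOn_compact hC).const_mul _),
      integral_const_mul, mul_assoc]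
  calc s ^ finrank ℝ E * (Z + (1 - s) * (β * J))
      = s ^ finrank ℝ E * ∫ x in C, g x * (1 + β * (1 - s) * (F x - F x₀)) ∂μ := by rw [hlin]
    _ ≤ s ^ finrank ℝ E * ∫ x in C, g (T x) ∂μ := by
        refine mul_le_mul_of_nonneg_left ?_ (pow_nonneg hs.1.le _)
        refine setIntegral_mono_on ?_ (hgT.integrableOn_compact (μ := μ) hC) hC.measurableSet
          fun x hx => hF.exp_neg_mul_le_comp_homothety hx₀ hβ (Ioo_subset_Icc_self hs) hx
        exact (hg.mul (by fun_prop)).integrableOn_compact hC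
    _ = ∫ x in T '' C, g x ∂μ := by
        rw [setIntegral_image_homothety μ hC.measurableSet x₀ hs.1.ne', abs_of_pos hs.1,
          smul_eq_mul]
    _ ≤ Z :=
        setIntegral_mono_set (hg.integrableOn_compact hC)
          (Eventually.of_forall fun x => (exp_pos _).le) hTC.image_subset.eventuallyLE

end ConvexPotential

theorem convexOn_finsetSum {E ι : Type*} [AddCommGroup E] [Module ℝ E] {C : Set E}
    (hC : Convex ℝ C) (t : Finset ι) {f : ι → E → ℝ} (hf : ∀ i ∈ t, ConvexOn ℝ C (f i)) :
    ConvexOn ℝ C fun x => ∑ i ∈ t, f i x := by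
  induction t using Finset.cons_induction with
  | empty => simpa using convexOn_const 0 hC
  | cons i t hi ih =>
    simp_rw [Finset.sum_cons]
    exact (hf i (Finset.mem_cons_self i t)).add
      (ih fun j hj => hf j (Finset.mem_cons_of_mem hj))

theorem convexOn_empLoss {p n : ℕ} {τ : Type*} {ℓ : Eu p → τ → ℝ} {C : Set (Eu p)}
    (hC : Convex ℝ C) (hℓ : ∀ d, ConvexOn ℝ C fun θ => ℓ θ d) (D : Fin n → τ) :
    ConvexOn ℝ C (empLoss ℓ D) :=
  (convexOn_finsetSum hC Finset.univ fun i _ => hℓ (D i)).smul (by positivity)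

theorem continuousOn_empLoss {p n : ℕ} {τ : Type*} {ℓ : Eu p → τ → ℝ} {C : Set (Eu p)}
    (hℓ : ∀ d, ContinuousOn (fun θ => ℓ θ d) C) (D : Fin n → τ) :
    ContinuousOn (empLoss ℓ D) C :=
  continuousOn_const.mul (continuousOn_finsetSum _ fun i _ => hℓ (D i))

theorem gibbs_eq_tilted {p : ℕ} {C : Set (Eu p)} (hvol : volume C ≠ 0) {β : ℝ}
    {F : Eu p → ℝ} (hint : IntegrableOn (fun θ => exp (-β * F θ)) C) :
    gibbs C β F = (volume.restrict C).tilted fun θ => -β * F θ := by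
  have : NeZero (volume.restrict C) := ⟨by simpa using hvol⟩
  have hZ := integral_exp_pos hint
  rw [gibbs, Measure.tilted, ← ofReal_integral_eq_lintegral_ofReal hint
    (Eventually.of_forall fun θ => (exp_pos _).le), ← withDensity_smul' _ _
    (ENNReal.inv_ne_top.2 (ENNReal.ofReal_pos.2 hZ).ne')]
  congr with θ
  rw [Pi.smul_apply, smul_eq_mul, ENNReal.ofReal_div_of_pos hZ, div_eq_mul_inv, mul_comm]

theorem integral_gibbs_sub_sInf_le {p : ℕ} {C : Set (Eu p)} (hC : IsCompact C)
    (hvol : volume C ≠ 0) {F : Eu p → ℝ} (hFc : ContinuousOn F C) (hF : ConvexOn ℝ C F)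
    {β : ℝ} (hβ : 0 < β) :
    ∫ θ, F θ ∂gibbs C β F - sInf (F '' C) ≤ p / β := by
  obtain ⟨x₀, hx₀, hmin⟩ := hC.exists_isMinOn (nonempty_of_measure_ne_zero hvol) hFc
  set g : Eu p → ℝ := fun θ => exp (-β * F θ)
  have hg : ContinuousOn g C := by fun_prop
  have hZ : 0 < ∫ θ in C, g θ := by
    have : NeZero (volume.restrict C) := ⟨by simpa using hvol⟩
    exact integral_exp_pos (hg.integrableOn_compact hC)
  have hsplit :
      ∫ θ in C, g θ * (F θ - F x₀) = (∫ θ in C, g θ * F θ) - F x₀ * ∫ θ in C, g θ := by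
    rw [← integral_const_mul, ← integral_sub]
    · simp_rw [mul_sub, mul_comm]
    · exact (hg.mul hFc).integrableOn_compact hC
    · exact (hg.integrableOn_compact hC).const_mul _
  have key := hF.mul_setIntegral_exp_mul_sub_le volume hC hFc hx₀ hβ.le
  rw [finrank_euclideanSpace_fin, hsplit] at key
  rw [gibbs_eq_tilted hvol (hg.integrableOn_compact hC), integral_tilted,
    IsLeast.csInf_eq ⟨mem_image_of_mem F hx₀, forall_mem_image.2 hmin⟩]
  simp_rw [smul_eq_mul, div_mul_eq_mul_div]
  rw [integral_div, sub_le_iff_le_add, div_le_iff₀ hZ, div_add' _ _ _ hβ.ne', div_mul_eq_mul_div,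
    le_div_iff₀ hβ]
  linarith

/-- utility of the exponential mechanism for convex losses
(utility part of Theorem 3.1). -/
theorem exponential_mechanism_utility_convex :
    ∃ c : ℝ, 0 < c ∧
      ∀ (p n : ℕ), 1 ≤ p → 1 ≤ n → ∀ (τ : Type) (ℓ : Eu p → τ → ℝ),
      ∀ (C : Set (Eu p)), IsCompact C → Convex ℝ C →
        0 < Metric.diam C → 0 < volume C →
      ∀ (L : ℝ), 0 < L →
        (∀ d : τ, ConvexOn ℝ C (fun θ => ℓ θ d)) →
        (∀ d : τ, LipschitzOnWith L.toNNReal (fun θ => ℓ θ d) C) →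
      ∀ (ε : ℝ), 0 < ε →
      ∀ (D : Fin n → τ),
        (∫ θ, empLoss ℓ D θ
            ∂(gibbs C (ε * n / (2 * L * Metric.diam C)) (empLoss ℓ D))) -
          sInf (empLoss ℓ D '' C) ≤
        c * L * p * Metric.diam C / (ε * n) := by
  refine ⟨2, two_pos, ?_⟩
  intro p n _ hn τ ℓ C hC hconv hdiam hvol L hL hcx hlip ε hε D
  have hn0 : (0 : ℝ) < n := by exact_mod_cast hn
  have hβ : 0 < ε * n / (2 * L * Metric.diam C) := by positivity
  calc _ ≤ p / (ε * n / (2 * L * Metric.diam C)) :=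
        integral_gibbs_sub_sInf_le hC hvol.ne'
          (continuousOn_empLoss (fun d => (hlip d).continuousOn) D)
          (convexOn_empLoss hconv hcx D) hβ
    _ = 2 * L * p * Metric.diam C / (ε * n) := by field_simp

end
end

section
/- Lemma 5.1 (uniform stability of projected noisy gradient descent with shared noise). Let C ⊆ ℝ^p be a nonempty closed convex set and let f, f′ : ℝ^p → ℝ be differentiable, m-strongly convex, and M-smooth functions such that ‖∇f(θ) − ∇f′(θ)‖ ≤ Δ for all θ ∈ C. Fix a step size η with 0 < η ≤ 1/M, an initial point θ₀ = θ₀′ ∈ C, and an arbitrary sequence of vectors (ξ_t)_{t≥0} in ℝ^p (a shared realization of the noise). Define θ_{t+1} = Π_C(θ_t − η ∇f(θ_t) + ξ_t) and θ′_{t+1} = Π_C(θ′_t − η ∇f′(θ′_t) + ξ_t), where Π_C denotes Euclidean projection onto C. Then for every t ≥ 0, ‖θ_t − θ′_t‖ ≤ Δ/m. -/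
/-!
Because both runs see the same noise, it cancels in the difference of the two updates. The
projection onto a convex set is 1-Lipschitz, and for an `m`-strongly convex `f` with `M`-Lipschitz
gradient and `η ≤ 1/M` the gradient step `x ↦ x - η ∇f(x)` is a `(1 - ηm)`-contraction; using
`∇f` instead of `∇f'` at `θ'_t` costs at most `ηΔ`. Hence `d_{t+1} ≤ (1 - ηm) d_t + ηΔ` with
`d_0 = 0`, and `Δ/m` is the fixed point of this recursion.

The contraction comes from co-coercivity of the gradient `G` of the convex function
`h = f - (m/2)‖·‖²`, which satisfies the descent inequality with constant `M - m`:
`‖G x - G y‖² ≤ (M - m) ⟪G x - G y, x - y⟫`, obtained by comparing `h` at `y + s (G x - G y)`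
from below (convexity at `x`) and from above (descent inequality at `y`).
-/

open MeasureTheory Real

noncomputable section

open Set
open scoped RealInnerProductSpace NNReal

section Gradient

variable {E : Type*} [NormedAddCommGroup E] [InnerProductSpace ℝ E] [CompleteSpace E]
  {φ ψ : E → ℝ} {G : E → E} {a b x y : E}

theorem HasGradientAt.sub (hφ : HasGradientAt φ a x) (hψ : HasGradientAt ψ b x) :
    HasGradientAt (fun z => φ z - ψ z) (a - b) x := by
  rw [hasGradientAt_iff_hasFDerivAt, map_sub]
  exact hφ.hasFDerivAt.sub hψ.hasFDerivAt

theorem hasGradientAt_half_mul_norm_sq (c : ℝ) (x : E) :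
    HasGradientAt (fun z => c / 2 * ‖z‖ ^ 2) (c • x) x := by
  rw [hasGradientAt_iff_hasFDerivAt]
  refine ((hasStrictFDerivAt_norm_sq x).hasFDerivAt.const_mul (c / 2)).congr_fderiv ?_
  ext v
  simp only [smul_apply, coe_innerSL_apply, nsmul_eq_mul, Nat.cast_ofNat, smul_eq_mul, map_smul,
    InnerProductSpace.toDual_apply_apply]
  ring

theorem HasGradientAt.hasDerivAt_comp_lineMap {t : ℝ}
    (hφ : HasGradientAt φ a (AffineMap.lineMap x y t)) :
    HasDerivAt (fun s => φ (AffineMap.lineMap x y s)) ⟪a, y - x⟫ t := by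
  have h := hφ.hasFDerivAt.comp_hasDerivAt t (AffineMap.hasDerivAt_lineMap (a := x) (b := y))
  simp only [InnerProductSpace.toDual_apply_apply] at h
  exact h

theorem ConvexOn.add_inner_le_of_hasGradientAt (hφ : ConvexOn ℝ univ φ)
    (ha : HasGradientAt φ a x) (y : E) : φ x + ⟪a, y - x⟫ ≤ φ y := by
  have hρ : ConvexOn ℝ univ (fun s : ℝ => φ (AffineMap.lineMap x y s)) :=
    hφ.comp_affineMap (AffineMap.lineMap x y)
  have hρ' := (AffineMap.lineMap_apply_zero x y (k := ℝ) ▸ ha).hasDerivAt_comp_lineMap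
  have := hρ.le_slope_of_hasDerivAt (mem_univ 0) (mem_univ 1) zero_lt_one hρ'
  simp only [slope, sub_zero, inv_one, AffineMap.lineMap_apply_one, AffineMap.lineMap_apply_zero,
    vsub_eq_sub, smul_eq_mul, one_mul] at this
  linarith

theorem add_inner_le_of_monotone_gradient (hG : ∀ x, HasGradientAt φ (G x) x)
    (hmono : ∀ a b, 0 ≤ ⟪G a - G b, a - b⟫) (x y : E) : φ x + ⟪G x, y - x⟫ ≤ φ y := by
  obtain ⟨c, hc, hslope⟩ := exists_hasDerivAt_eq_slope (fun s => φ (AffineMap.lineMap x y s))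
    (fun s => ⟪G (AffineMap.lineMap x y s), y - x⟫) zero_lt_one
    (fun s _ => (hG _).hasDerivAt_comp_lineMap.continuousAt.continuousWithinAt)
    (fun s _ => (hG _).hasDerivAt_comp_lineMap)
  have h := hmono (AffineMap.lineMap x y c) x
  rw [← vsub_eq_sub (AffineMap.lineMap x y c), AffineMap.lineMap_vsub_left, vsub_eq_sub,
    real_inner_smul_right, inner_sub_left] at h
  simp only [AffineMap.lineMap_apply_one, AffineMap.lineMap_apply_zero, sub_zero, div_one] at hslope
  nlinarith [hc.1]

theorem ConvexOn.inner_gradient_sub_nonneg (hφ : ConvexOn ℝ univ φ)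
    (hG : ∀ x, HasGradientAt φ (G x) x) (x y : E) : 0 ≤ ⟪G x - G y, x - y⟫ := by
  have hx := hφ.add_inner_le_of_hasGradientAt (hG x) y
  have hy := hφ.add_inner_le_of_hasGradientAt (hG y) x
  rw [← neg_sub x y, inner_neg_right] at hx
  rw [inner_sub_left]
  linarith

theorem LipschitzWith.le_add_inner_add_sq {K : ℝ≥0} (hG : ∀ x, HasGradientAt φ (G x) x)
    (hK : LipschitzWith K G) (x y : E) :
    φ y ≤ φ x + ⟪G x, y - x⟫ + K / 2 * ‖y - x‖ ^ 2 := by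
  -- `K/2 ‖·‖² - φ` has a monotone gradient, so it lies above its tangents.
  have hmono : ∀ a b, 0 ≤ ⟪(K : ℝ) • a - G a - ((K : ℝ) • b - G b), a - b⟫ := by
    intro a b
    have hCS := real_inner_le_norm (G a - G b) (a - b)
    have hL := hK.norm_sub_le a b
    rw [show (K : ℝ) • a - G a - ((K : ℝ) • b - G b) = (K : ℝ) • (a - b) - (G a - G b) by
      rw [smul_sub]; abel, inner_sub_left, real_inner_smul_left, real_inner_self_eq_norm_sq]
    nlinarith [norm_nonneg (a - b)]
  have h := add_inner_le_of_monotone_gradient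
    (fun z => (hasGradientAt_half_mul_norm_sq (K : ℝ) z).sub (hG z)) hmono x y
  have hsq : ‖y‖ ^ 2 = ‖x‖ ^ 2 + 2 * ⟪x, y - x⟫ + ‖y - x‖ ^ 2 := by
    rw [← norm_add_sq_real, add_sub_cancel]
  rw [inner_sub_left, real_inner_smul_left] at h
  nlinarith

section Cocoercive

variable {h : E → ℝ} {L : ℝ} (hconv : ConvexOn ℝ univ h) (hG : ∀ x, HasGradientAt h (G x) x)
  (hU : ∀ x y, h y ≤ h x + ⟪G x, y - x⟫ + L / 2 * ‖y - x‖ ^ 2)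
include hconv hG hU

theorem add_inner_add_norm_gradient_sub_sq_le (s : ℝ) (x y : E) :
    h x + ⟪G x, y - x⟫ + (s - L / 2 * s ^ 2) * ‖G x - G y‖ ^ 2 ≤ h y := by
  set u := G x - G y
  have hlow := hconv.add_inner_le_of_hasGradientAt (hG x) (y + s • u)
  have hup := hU y (y + s • u)
  rw [show y + s • u - x = (y - x) + s • u by abel, inner_add_right,
    real_inner_smul_right] at hlow
  rw [add_sub_cancel_left, real_inner_smul_right, norm_smul, mul_pow, Real.norm_eq_abs,
    sq_abs] at hup
  have hu : ⟪G x, u⟫ - ⟪G y, u⟫ = ‖u‖ ^ 2 := by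
    rw [← inner_sub_left, real_inner_self_eq_norm_sq]
  linear_combination hlow + hup - s * hu

theorem mul_norm_gradient_sub_sq_le_inner (s : ℝ) (x y : E) :
    (2 * s - L * s ^ 2) * ‖G x - G y‖ ^ 2 ≤ ⟪G x - G y, x - y⟫ := by
  have hxy := add_inner_add_norm_gradient_sub_sq_le hconv hG hU s x y
  have hyx := add_inner_add_norm_gradient_sub_sq_le hconv hG hU s y x
  rw [norm_sub_rev (G y)] at hyx
  rw [← neg_sub x y, inner_neg_right] at hxy
  rw [inner_sub_left]
  linarith

theorem norm_gradient_sub_sq_le_mul_inner (hL : 0 ≤ L) (x y : E) :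
    ‖G x - G y‖ ^ 2 ≤ L * ⟪G x - G y, x - y⟫ := by
  have key := mul_norm_gradient_sub_sq_le_inner hconv hG hU
  rcases hL.eq_or_lt with rfl | hL
  -- for `L = 0`, `2 s ‖G x - G y‖² ≤ ⟪G x - G y, x - y⟫` for every `s` forces `G x = G y`
  · by_contra! hpos
    rw [zero_mul] at hpos
    have := key ((⟪G x - G y, x - y⟫ + 1) / (2 * ‖G x - G y‖ ^ 2)) x y
    generalize ‖G x - G y‖ ^ 2 = u2 at this hpos
    rw [zero_mul, sub_zero] at this
    field_simp at this
    linarith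
  · have := key L⁻¹ x y
    rw [show 2 * L⁻¹ - L * L⁻¹ ^ 2 = L⁻¹ by field_simp; ring, inv_mul_le_iff₀ hL] at this
    exact this

end Cocoercive

section StronglyConvex

variable {f : E → ℝ} {g : E → E} {m : ℝ} {K : ℝ≥0} (hf : ∀ x, HasGradientAt f (g x) x)
  (hsc : ConvexOn ℝ univ fun x => f x - m / 2 * ‖x‖ ^ 2) (hK : LipschitzWith K g)
include hf hsc hK

theorem le_of_convexOn_sub_of_lipschitzWith_gradient [Nontrivial E] : m ≤ K := by
  obtain ⟨v, hv⟩ := exists_ne (0 : E)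
  have hmono := hsc.inner_gradient_sub_nonneg
    (fun x => (hf x).sub (hasGradientAt_half_mul_norm_sq m x)) v 0
  have hCS := real_inner_le_norm (g v - g 0) v
  have hL := hK.norm_sub_le v 0
  rw [sub_zero] at hL
  rw [smul_zero, sub_zero, sub_zero, sub_right_comm, inner_sub_left, real_inner_smul_left,
    real_inner_self_eq_norm_sq] at hmono
  have hv2 : 0 < ‖v‖ ^ 2 := by positivity
  nlinarith [norm_nonneg v]

theorem norm_sub_smul_gradient_sub_le {η : ℝ} (hη : 0 ≤ η) (hηK : η * K ≤ 1) (hmK : m ≤ K)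
    (x y : E) : ‖(x - η • g x) - (y - η • g y)‖ ≤ (1 - η * m) * ‖x - y‖ := by
  set G : E → E := fun z => g z - m • z
  have hG : ∀ z, HasGradientAt (fun x => f x - m / 2 * ‖x‖ ^ 2) (G z) z :=
    fun z => (hf z).sub (hasGradientAt_half_mul_norm_sq m z)
  have hU : ∀ x y, f y - m / 2 * ‖y‖ ^ 2 ≤
      f x - m / 2 * ‖x‖ ^ 2 + ⟪G x, y - x⟫ + (K - m) / 2 * ‖y - x‖ ^ 2 := by
    intro x y
    have hsq : ‖y‖ ^ 2 = ‖x‖ ^ 2 + 2 * ⟪x, y - x⟫ + ‖y - x‖ ^ 2 := by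
      rw [← norm_add_sq_real, add_sub_cancel]
    have := hK.le_add_inner_add_sq hf x y
    simp only [G, inner_sub_left, real_inner_smul_left]
    rw [hsq]
    linarith
  have hco := norm_gradient_sub_sq_le_mul_inner hsc hG hU (sub_nonneg.2 hmK) x y
  have hmono := hsc.inner_gradient_sub_nonneg hG x y
  have hstep : (x - η • g x) - (y - η • g y) = (1 - η * m) • (x - y) - η • (G x - G y) := by
    simp only [G]
    module
  have hηm : 0 ≤ 1 - η * m := by nlinarith
  refine le_of_pow_le_pow_left₀ two_ne_zero (by positivity) ?_
  rw [hstep, norm_sub_sq_real, norm_smul, norm_smul, real_inner_smul_left, real_inner_smul_right,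
    Real.norm_of_nonneg hηm, Real.norm_of_nonneg hη, real_inner_comm]
  have hηL : η * (K - m) ≤ 1 - η * m := by linarith
  nlinarith [mul_le_mul_of_nonneg_left hco (sq_nonneg η),
    mul_le_mul_of_nonneg_right hηL (mul_nonneg hη hmono), mul_nonneg hηm (mul_nonneg hη hmono)]

end StronglyConvex

end Gradient

section Projection

variable {F : Type*} [NormedAddCommGroup F] [InnerProductSpace ℝ F] {C : Set F} {proj : F → F}
  (hC : Convex ℝ C) (hproj : ∀ v, proj v ∈ C ∧ ∀ x ∈ C, dist v (proj v) ≤ dist v x)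
include hC hproj

theorem real_inner_sub_proj_le_zero (v : F) {z : F} (hz : z ∈ C) :
    ⟪v - proj v, z - proj v⟫ ≤ 0 := by
  have : Nonempty C := ⟨⟨proj v, (hproj v).1⟩⟩
  have hbdd : BddBelow (range fun w : C => ‖v - w‖) :=
    ⟨0, forall_mem_range.2 fun _ => norm_nonneg _⟩
  have hinf : ‖v - proj v‖ = ⨅ w : C, ‖v - w‖ :=
    le_antisymm (le_ciInf fun w => by simpa [dist_eq_norm] using (hproj v).2 w w.2)
      (ciInf_le hbdd ⟨proj v, (hproj v).1⟩)
  exact (norm_eq_iInf_iff_real_inner_le_zero hC (hproj v).1).mp hinf z hz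

theorem norm_proj_sub_proj_le (a b : F) : ‖proj a - proj b‖ ≤ ‖a - b‖ := by
  have ha := real_inner_sub_proj_le_zero hC hproj a (hproj b).1
  have hb := real_inner_sub_proj_le_zero hC hproj b (hproj a).1
  have key : ‖proj a - proj b‖ ^ 2 ≤ ⟪a - b, proj a - proj b⟫ := by
    rw [← neg_sub (proj a) (proj b), inner_neg_right] at ha
    rw [← real_inner_self_eq_norm_sq, show a - b = (a - proj a) - (b - proj b) + (proj a - proj b)
      by abel, inner_add_left, inner_sub_left (a - proj a)]
    linarith
  nlinarith [real_inner_le_norm (a - b) (proj a - proj b), norm_nonneg (proj a - proj b),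
    norm_nonneg (a - b)]

end Projection

theorem le_of_le_mul_add_of_fixedPoint {a : ℕ → ℝ} {c e r : ℝ} (hc : 0 ≤ c) (h0 : a 0 ≤ r)
    (hstep : ∀ n, a (n + 1) ≤ c * a n + e) (hr : c * r + e = r) (n : ℕ) : a n ≤ r := by
  induction n with
  | zero => exact h0
  | succ n ih => linarith [hstep n, mul_le_mul_of_nonneg_left ih hc]

theorem projected_noisy_gd_uniform_stability_general
    {p : ℕ}
    (C : Set (Eu p)) (hCconv : Convex ℝ C)
    (f : Eu p → ℝ) (g g' : Eu p → Eu p)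
    (hf : ∀ x, HasGradientAt f (g x) x)
    (m M : ℝ) (hm : 0 < m)
    -- `m`-strong convexity: `f - (m/2)‖·‖²` is convex
    (hsc : ConvexOn ℝ Set.univ (fun x => f x - m / 2 * ‖x‖ ^ 2))
    -- `M`-smoothness: the gradients are `M`-Lipschitz
    (hsm : LipschitzWith M.toNNReal g)
    (Δ : ℝ) (hΔ : ∀ x ∈ C, ‖g x - g' x‖ ≤ Δ)
    (η : ℝ) (hη0 : 0 < η) (hηM : η ≤ 1 / M)
    -- `proj` is the Euclidean projection onto `C`
    (proj : Eu p → Eu p)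
    (hproj : ∀ v, proj v ∈ C ∧ ∀ x ∈ C, dist v (proj v) ≤ dist v x)
    (ξ : ℕ → Eu p)
    (θ θ' : ℕ → Eu p) (hθ0 : θ 0 = θ' 0) (hθ0C : θ 0 ∈ C)
    (hstep : ∀ t, θ (t + 1) = proj (θ t - η • g (θ t) + ξ t))
    (hstep' : ∀ t, θ' (t + 1) = proj (θ' t - η • g' (θ' t) + ξ t)) :
    ∀ t, ‖θ t - θ' t‖ ≤ Δ / m := by
  have hΔ0 : 0 ≤ Δ := (norm_nonneg _).trans (hΔ _ hθ0C)
  -- `m ≤ M`, hence `η * m ≤ 1`, needs a nonzero vector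
  rcases subsingleton_or_nontrivial (Eu p) with _ | _
  · intro t
    rw [Subsingleton.elim (θ t) (θ' t), sub_self, norm_zero]
    positivity
  have hM : 0 < M := by
    by_contra! hM
    linarith [one_div_nonpos.mpr hM]
  have hK : (M.toNNReal : ℝ) = M := Real.coe_toNNReal M hM.le
  have hmK : m ≤ M.toNNReal := le_of_convexOn_sub_of_lipschitzWith_gradient hf hsc hsm
  have hηK : η * M.toNNReal ≤ 1 := by rw [hK]; rwa [le_div_iff₀ hM] at hηM
  have hηm : η * m ≤ 1 := by nlinarith
  have hθ'C : ∀ t, θ' t ∈ C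
    | 0 => hθ0 ▸ hθ0C
    | t + 1 => hstep' t ▸ (hproj _).1
  refine le_of_le_mul_add_of_fixedPoint (c := 1 - η * m) (e := η * Δ) (by linarith)
    (by rw [hθ0, sub_self, norm_zero]; positivity) (fun n => ?_) (by field_simp; ring)
  calc ‖θ (n + 1) - θ' (n + 1)‖
      ≤ ‖((θ n - η • g (θ n)) - (θ' n - η • g (θ' n))) - η • (g (θ' n) - g' (θ' n))‖ := by
        rw [hstep, hstep']
        refine (norm_proj_sub_proj_le hCconv hproj _ _).trans_eq ?_
        congr 1
        module
    _ ≤ (1 - η * m) * ‖θ n - θ' n‖ + η * Δ := by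
        refine norm_sub_le_of_le
          (norm_sub_smul_gradient_sub_le hf hsc hsm hη0.le hηK hmK _ _) ?_
        rw [norm_smul, Real.norm_of_nonneg hη0.le]
        exact mul_le_mul_of_nonneg_left (hΔ _ (hθ'C n)) hη0.le

/-- Lemma 5.1: uniform stability of projected noisy gradient descent
with a shared realization of the noise. -/
theorem projected_noisy_gd_uniform_stability
    {p : ℕ}
    (C : Set (Eu p)) (hCne : C.Nonempty) (hCcl : IsClosed C) (hCconv : Convex ℝ C)
    (f f' : Eu p → ℝ) (g g' : Eu p → Eu p)
    (hf : ∀ x, HasGradientAt f (g x) x) (hf' : ∀ x, HasGradientAt f' (g' x) x)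
    (m M : ℝ) (hm : 0 < m)
    -- `m`-strong convexity: `f - (m/2)‖·‖²` is convex
    (hsc : ConvexOn ℝ Set.univ (fun x => f x - m / 2 * ‖x‖ ^ 2))
    (hsc' : ConvexOn ℝ Set.univ (fun x => f' x - m / 2 * ‖x‖ ^ 2))
    -- `M`-smoothness: the gradients are `M`-Lipschitz
    (hsm : LipschitzWith M.toNNReal g) (hsm' : LipschitzWith M.toNNReal g')
    (Δ : ℝ) (hΔ : ∀ x ∈ C, ‖g x - g' x‖ ≤ Δ)
    (η : ℝ) (hη0 : 0 < η) (hηM : η ≤ 1 / M)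
    -- `proj` is the Euclidean projection onto `C`
    (proj : Eu p → Eu p)
    (hproj : ∀ v, proj v ∈ C ∧ ∀ x ∈ C, dist v (proj v) ≤ dist v x)
    (ξ : ℕ → Eu p)
    (θ θ' : ℕ → Eu p) (hθ0 : θ 0 = θ' 0) (hθ0C : θ 0 ∈ C)
    (hstep : ∀ t, θ (t + 1) = proj (θ t - η • g (θ t) + ξ t))
    (hstep' : ∀ t, θ' (t + 1) = proj (θ' t - η • g' (θ' t) + ξ t)) :
    ∀ t, ‖θ t - θ' t‖ ≤ Δ / m :=
  projected_noisy_gd_uniform_stability_general C hCconv f g g' hf m M hm hsc hsm Δ hΔ η hη0 hηM proj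
    hproj ξ θ θ' hθ0 hθ0C hstep hstep'

end
end
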